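/- arXiv:2111.05690 — 3 statements merged into one kernel-verified Lean document; each statement's English description precedes it below -/
import Mathlib

section
/- Let s ∈ [0, 1) and let G be the real symmetric 2×2 matrix with G_{11} = G_{22} = 1 and G_{12} = G_{21} = s. Then for every vector φ ∈ ℂ² with φ† G φ = 1, the l₁-norm of superposition satisfies 2|φ_1||φ_2| ≤ 1/(1 − s), and equality holds for the maximal state φ = (1/√(2(1 − s))) (1, −1)^⊤. -/
open Matrix

/-!
Writing `a = ‖φ 0‖`, `b = ‖φ 1‖` and `⟪φ 0, φ 1⟫_ℝ = Re (conj (φ 0) * φ 1)`, the Gram form is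
`a² + b² + 2s⟪φ 0, φ 1⟫_ℝ ≥ a² + b² - 2sab ≥ 2ab(1 - s)` by Cauchy–Schwarz (as `s ≥ 0`) and AM–GM.
Both steps are equalities when `φ 1 = -φ 0`, which gives the maximal state.
-/

theorem two_mul_norm_mul_norm_mul_one_sub_le {E : Type*} [NormedAddCommGroup E]
    [InnerProductSpace ℝ E] {s : ℝ} (hs : 0 ≤ s) (x y : E) :
    2 * ‖x‖ * ‖y‖ * (1 - s) ≤ ‖x‖ ^ 2 + ‖y‖ ^ 2 + 2 * s * inner ℝ x y := by
  have hxy : -(‖x‖ * ‖y‖) ≤ inner ℝ x y := neg_le_of_abs_le (abs_real_inner_le_norm x y)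
  nlinarith [two_mul_le_add_sq ‖x‖ ‖y‖]

theorem dotProduct_mulVec_gram_eq (s : ℝ) (φ : Fin 2 → ℂ) :
    star φ ⬝ᵥ (!![1, (s : ℂ); (s : ℂ), 1] *ᵥ φ) =
      ((‖φ 0‖ ^ 2 + ‖φ 1‖ ^ 2 + 2 * s * inner ℝ (φ 0) (φ 1) : ℝ) : ℂ) := by
  apply Complex.ext <;>
    simp [dotProduct, mulVec, Fin.sum_univ_two, Complex.inner, Complex.sq_norm,
      Complex.normSq_apply] <;> ring

/-- For the qubit Gram matrix with real inner product `s ∈ [0,1)`, every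
normalized state `φ` (i.e. `φ† G φ = 1`) has `l₁`-norm of superposition
`2|φ₁||φ₂| ≤ 1/(1−s)`, with equality for the maximal state `(1,−1)ᵀ/√(2(1−s))`. -/
theorem qubit_l1_norm_bound (s : ℝ) (hs : s ∈ Set.Ico (0 : ℝ) 1)
    (G : Matrix (Fin 2) (Fin 2) ℂ)
    (hGdef : G = !![1, (s : ℂ); (s : ℂ), 1])
    (ψ : Fin 2 → ℂ)
    (hψdef : ψ = fun i => ((1 / Real.sqrt (2 * (1 - s)) : ℝ) : ℂ) *
      (if i = 0 then 1 else -1)) :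
    (∀ φ : Fin 2 → ℂ, star φ ⬝ᵥ (G *ᵥ φ) = 1 → 2 * ‖φ 0‖ * ‖φ 1‖ ≤ 1 / (1 - s)) ∧
    star ψ ⬝ᵥ (G *ᵥ ψ) = 1 ∧
    2 * ‖ψ 0‖ * ‖ψ 1‖ = 1 / (1 - s) := by
  obtain ⟨hs0, hs1⟩ := hs
  have h1s : 0 < 1 - s := sub_pos.mpr hs1
  subst hGdef hψdef
  set c := 1 / Real.sqrt (2 * (1 - s))
  have hc : 0 < c := by positivity
  have hc2 : 2 * c ^ 2 * (1 - s) = 1 := by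
    rw [div_pow, Real.sq_sqrt (by positivity)]; field_simp
  refine ⟨fun φ hφ => ?_, ?_, ?_⟩
  · rw [dotProduct_mulVec_gram_eq, Complex.ofReal_eq_one] at hφ
    rw [le_div_iff₀ h1s]
    exact (two_mul_norm_mul_norm_mul_one_sub_le hs0 (φ 0) (φ 1)).trans_eq hφ
  · rw [dotProduct_mulVec_gram_eq, Complex.ofReal_eq_one]
    simp only [Fin.isValue, ↓reduceIte, mul_one, Complex.norm_real, Real.norm_eq_abs,
      abs_of_pos hc, one_ne_zero, mul_neg, norm_neg, inner_neg_right,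
      inner_self_eq_norm_sq_to_K, Real.ringHom_apply]
    linear_combination hc2
  · rw [eq_div_iff h1s.ne']
    simp only [Fin.isValue, ↓reduceIte, mul_one, Complex.norm_real, Real.norm_eq_abs,
      abs_of_pos hc, one_ne_zero, mul_neg, norm_neg]
    linear_combination hc2
end

section
/- Let s ∈ [0, 1/2) and let G be the 3×3 Hermitian matrix with unit diagonal and off-diagonal entries G_{12} = s, G_{13} = i s, G_{23} = −i s (and G_{21} = s, G_{31} = −i s, G_{32} = i s). Then the vector ψ = (1/√(3(1 − 2s))) (−i, i, 1)^⊤ satisfies: (i) G ψ = (1 − 2s) ψ; (ii) 1 − 2s is the minimum eigenvalue of G (the other eigenvalue being 1 + s with multiplicity two); (iii) ψ† G ψ = 1; and (iv) ψ̃_i := ψ_i^* (Gψ)_i = 1/3 for i = 1, 2, 3. -/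
open Matrix BigOperators Polynomial

/-!
Up to the factor `1/√(3(1 − 2s))`, `ψ` is the phase vector `(−i, i, 1)`, an eigenvector of `G`
for `1 − 2s`. Since its entries have unit modulus, every `ψ̃ᵢ = (1 − 2s)|ψᵢ|²` equals `1/3`, and
these sum to `ψ† G ψ = 1`. The characteristic polynomial factors as
`(X − (1 + s))² (X − (1 − 2s))`, and the eigenvalues of a Hermitian matrix are exactly the real
roots of its characteristic polynomial, so `1 − 2s` is the least of them because `s ≥ 0`.
-/

theorem Matrix.IsHermitian.isRoot_charpoly_iff {𝕜 n : Type*} [RCLike 𝕜] [Fintype n]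
    [DecidableEq n] {A : Matrix n n 𝕜} (hA : A.IsHermitian) (μ : ℝ) :
    A.charpoly.IsRoot (μ : 𝕜) ↔ ∃ i, hA.eigenvalues i = μ := by
  rw [← mem_roots (charpoly_monic A).ne_zero, hA.roots_charpoly_eq_eigenvalues]
  simp

theorem Matrix.star_mul_mulVec_apply_of_mulVec_eq_smul {n : Type*} [Fintype n]
    {A : Matrix n n ℂ} {ψ : n → ℂ} {μ : ℝ} (h : A *ᵥ ψ = (μ : ℂ) • ψ) (i : n) :
    star (ψ i) * (A *ᵥ ψ) i = μ * ‖ψ i‖ ^ 2 := by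
  rw [h, Pi.smul_apply, smul_eq_mul, mul_left_comm, Complex.star_def, Complex.conj_mul']

section

open Complex

def qutritGram (s : ℝ) : Matrix (Fin 3) (Fin 3) ℂ :=
  !![1, (s : ℂ), I * s;
     (s : ℂ), 1, -I * s;
     -I * s, I * s, 1]

def qutritPhases : Fin 3 → ℂ := ![-I, I, 1]

theorem norm_qutritPhases (i : Fin 3) : ‖qutritPhases i‖ = 1 := by
  fin_cases i <;> simp [qutritPhases]

theorem qutritGram_mulVec_qutritPhases (s : ℝ) :
    qutritGram s *ᵥ qutritPhases = ((1 - 2 * s : ℝ) : ℂ) • qutritPhases := by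
  ext i
  fin_cases i <;> simp [qutritGram, qutritPhases, mulVec, dotProduct, Fin.sum_univ_three]
  · ring
  · ring
  · linear_combination (2 * (s : ℂ)) * I_mul_I

theorem charpoly_qutritGram (s : ℝ) :
    (qutritGram s).charpoly = (X - C ((1 + s : ℝ) : ℂ)) ^ 2 * (X - C ((1 - 2 * s : ℝ) : ℂ)) := by
  refine Polynomial.funext fun t => ?_
  rw [eval_charpoly, det_fin_three]
  simp [qutritGram]
  linear_combination (2 * (s : ℂ) ^ 2 * (t - 1) - 2 * (s : ℂ) ^ 3) * I_mul_I

end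

theorem eigenvalues_qutritGram_eq_or {s : ℝ} (hH : (qutritGram s).IsHermitian) (i : Fin 3) :
    hH.eigenvalues i = 1 + s ∨ hH.eigenvalues i = 1 - 2 * s := by
  have hroot := (hH.isRoot_charpoly_iff (hH.eigenvalues i)).2 ⟨i, rfl⟩
  simp only [charpoly_qutritGram, IsRoot.def, eval_mul, eval_pow, eval_sub, eval_X, eval_C,
    mul_eq_zero, pow_eq_zero_iff two_ne_zero, sub_eq_zero] at hroot
  exact hroot.imp (Complex.ofReal_injective ·) (Complex.ofReal_injective ·)

theorem exists_eigenvalues_qutritGram_eq {s : ℝ} (hH : (qutritGram s).IsHermitian) :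
    ∃ i, hH.eigenvalues i = 1 - 2 * s :=
  (hH.isRoot_charpoly_iff _).1 (by simp [charpoly_qutritGram])

/-- For `s ∈ [0, 1/2)` and the 3×3 Hermitian Gram matrix with
`⟨c₁|c₂⟩ = s`, `⟨c₁|c₃⟩ = is`, `⟨c₂|c₃⟩ = −is`, the state
`ψ = (−i, i, 1)ᵀ/√(3(1−2s))` is an eigenvector for `1 − 2s`, which is the minimum
eigenvalue (the other eigenvalue being `1 + s` with multiplicity two); moreover
`ψ† G ψ = 1` and `ψ̃ᵢ = ψᵢ*(Gψ)ᵢ = 1/3` for all `i`. -/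
theorem qutrit_maximal_state_complex (s : ℝ) (hs : s ∈ Set.Ico (0 : ℝ) (1/2))
    (G : Matrix (Fin 3) (Fin 3) ℂ)
    (hGdef : G = !![1, (s : ℂ), Complex.I * s;
                    (s : ℂ), 1, -Complex.I * s;
                    -Complex.I * s, Complex.I * s, 1])
    (hH : G.IsHermitian)
    (ψ : Fin 3 → ℂ)
    (hψdef : ψ = fun i => ((1 / Real.sqrt (3 * (1 - 2 * s)) : ℝ) : ℂ) *
      ![-Complex.I, Complex.I, 1] i) :
    G.charpoly = (X - C ((1 + s : ℝ) : ℂ)) ^ 2 * (X - C ((1 - 2 * s : ℝ) : ℂ)) ∧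
    G *ᵥ ψ = ((1 - 2 * s : ℝ) : ℂ) • ψ ∧
    ((∃ i, hH.eigenvalues i = 1 - 2 * s) ∧ ∀ i, 1 - 2 * s ≤ hH.eigenvalues i) ∧
    star ψ ⬝ᵥ (G *ᵥ ψ) = 1 ∧
    ∀ i, star (ψ i) * (G *ᵥ ψ) i = 1 / 3 := by
  obtain ⟨hs0, hs2⟩ := hs
  obtain rfl : G = qutritGram s := hGdef
  set c : ℝ := 1 / Real.sqrt (3 * (1 - 2 * s))
  obtain rfl : ψ = (c : ℂ) • qutritPhases := hψdef
  have hc : (1 - 2 * s) * c ^ 2 = 1 / 3 := by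
    have hpos : 0 < 1 - 2 * s := by linarith
    rw [div_pow, one_pow, Real.sq_sqrt (by positivity)]
    field_simp
  have hev : qutritGram s *ᵥ ((c : ℂ) • qutritPhases) =
      ((1 - 2 * s : ℝ) : ℂ) • ((c : ℂ) • qutritPhases) := by
    rw [mulVec_smul, qutritGram_mulVec_qutritPhases, smul_comm]
  have hcomp (i : Fin 3) :
      star (((c : ℂ) • qutritPhases) i) * (qutritGram s *ᵥ ((c : ℂ) • qutritPhases)) i = 1 / 3 := by
    rw [star_mul_mulVec_apply_of_mulVec_eq_smul hev, Pi.smul_apply, norm_smul, norm_qutritPhases,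
      mul_one, Complex.norm_real, Real.norm_eq_abs]
    norm_cast
    rw [sq_abs, hc]
    norm_num
  refine ⟨charpoly_qutritGram s, hev,
    ⟨exists_eigenvalues_qutritGram_eq hH, fun i => ?_⟩, ?_, hcomp⟩
  · rcases eigenvalues_qutritGram_eq_or hH i with h | h <;> linarith
  · simp only [dotProduct, Pi.star_apply, hcomp]
    norm_num
end

section
/- Let G be a d×d Hermitian positive-definite complex matrix with minimum eigenvalue λ_min. Then for every vector ψ ∈ ℂ^d with ψ† G ψ = 1, the l₁-norm of superposition satisfies Σ_{i≠j} |ψ_i||ψ_j| ≤ (d − 1)/λ_min. -/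
/-!
The Gram matrix dominates `λ_min • 1` in the Loewner order, so the normalization `ψ† G ψ = 1`
forces `λ_min ∑ |ψᵢ|² ≤ 1`. The off-diagonal sum equals `(∑ |ψᵢ|)² - ∑ |ψᵢ|²`, which by
Cauchy–Schwarz is at most `(d - 1) ∑ |ψᵢ|²`.
-/

open Matrix Finset
open scoped ComplexOrder MatrixOrder

section OffDiagonal

variable {ι R : Type*} [Fintype ι] [DecidableEq ι]

theorem Finset.sum_sum_ite_ne_mul_eq [CommRing R] (a : ι → R) :
    ∑ i, ∑ j, (if i ≠ j then a i * a j else 0) = (∑ i, a i) ^ 2 - ∑ i, a i ^ 2 := by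
  simp_rw [sq, sum_mul_sum, ← sum_sub_distrib, ← sum_filter, filter_ne,
    sum_erase_eq_sub (mem_univ _)]

theorem Finset.sum_sum_ite_ne_mul_le [CommRing R] [LinearOrder R] [IsStrictOrderedRing R]
    (a : ι → R) :
    ∑ i, ∑ j, (if i ≠ j then a i * a j else 0) ≤ (Fintype.card ι - 1) * ∑ i, a i ^ 2 := by
  have hCS := sq_sum_le_card_mul_sum_sq (s := univ) (f := a)
  rw [card_univ] at hCS
  rw [sum_sum_ite_ne_mul_eq]
  linarith

end OffDiagonal

namespace Matrix

variable {𝕜 n : Type*} [RCLike 𝕜] [Fintype n]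

theorem star_dotProduct_self_eq_sum_norm_sq (v : n → 𝕜) :
    star v ⬝ᵥ v = ((∑ i, ‖v i‖ ^ 2 : ℝ) : 𝕜) := by
  simp [dotProduct, RCLike.conj_mul]

theorem IsHermitian.posSemidef_sub_algebraMap [DecidableEq n] {A : Matrix n n 𝕜}
    (hA : A.IsHermitian) {c : ℝ} (hc : ∀ i, c ≤ hA.eigenvalues i) :
    (A - algebraMap ℝ (Matrix n n 𝕜) c).PosSemidef := by
  rw [← le_iff, algebraMap_le_iff_le_spectrum hA.isSelfAdjoint,
    hA.spectrum_real_eq_range_eigenvalues]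
  rintro _ ⟨i, rfl⟩
  exact hc i

theorem IsHermitian.mul_star_dotProduct_self_le [DecidableEq n] {A : Matrix n n 𝕜}
    (hA : A.IsHermitian) {c : ℝ} (hc : ∀ i, c ≤ hA.eigenvalues i) (x : n → 𝕜) :
    (c : 𝕜) * (star x ⬝ᵥ x) ≤ star x ⬝ᵥ (A *ᵥ x) := by
  have h := (hA.posSemidef_sub_algebraMap hc).dotProduct_mulVec_nonneg x
  rwa [sub_mulVec, dotProduct_sub, sub_nonneg, Algebra.algebraMap_eq_smul_one, smul_mulVec,
    one_mulVec, dotProduct_smul, RCLike.real_smul_eq_coe_mul] at h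

end Matrix

/-- For a Hermitian positive-definite Gram matrix `G` with minimum eigenvalue
`lmin`, every normalized state `ψ` (i.e. `ψ† G ψ = 1`) has `l₁`-norm of superposition
`∑_{i≠j} |ψᵢ||ψⱼ| ≤ (d − 1)/lmin`. -/
theorem l1_norm_superposition_bound {d : ℕ} (G : Matrix (Fin d) (Fin d) ℂ)
    (hH : G.IsHermitian) (hpd : G.PosDef)
    (lmin : ℝ)
    (hmin₁ : ∃ i, hH.eigenvalues i = lmin)
    (hmin₂ : ∀ i, lmin ≤ hH.eigenvalues i)
    (ψ : Fin d → ℂ)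
    (hψ : star ψ ⬝ᵥ (G *ᵥ ψ) = 1) :
    ∑ i, ∑ j, (if i ≠ j then ‖ψ i‖ * ‖ψ j‖ else 0) ≤ ((d : ℝ) - 1) / lmin := by
  obtain ⟨i₀, hi₀⟩ := hmin₁
  have hlmin : 0 < lmin := hi₀ ▸ hpd.eigenvalues_pos i₀
  have hd : (1 : ℝ) ≤ d := by exact_mod_cast i₀.pos
  have hnorm : lmin * ∑ i, ‖ψ i‖ ^ 2 ≤ 1 := by
    have h := hH.mul_star_dotProduct_self_le hmin₂ ψ
    rwa [hψ, star_dotProduct_self_eq_sum_norm_sq, ← RCLike.ofReal_mul, ← RCLike.ofReal_one,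
      RCLike.ofReal_le_ofReal] at h
  calc ∑ i, ∑ j, (if i ≠ j then ‖ψ i‖ * ‖ψ j‖ else 0)
      ≤ ((d : ℝ) - 1) * ∑ i, ‖ψ i‖ ^ 2 := by
        simpa using sum_sum_ite_ne_mul_le fun i => ‖ψ i‖
    _ ≤ ((d : ℝ) - 1) * (1 / lmin) := by
        gcongr
        rwa [le_div_iff₀' hlmin]
    _ = ((d : ℝ) - 1) / lmin := mul_one_div _ _
end
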